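/- arXiv:2409.17837 — 2 statements merged into one kernel-verified Lean document; each statement's English description precedes it below -/
import Mathlib

section
/- The Enriques involution permutation σ of the 32 curve classes is an isometry of the Kummer configuration lattice: for all x and y in the free ℤ-module on the nodes and tropes, B(σx, σy) = B(x, y); equivalently, B(σc, σc') = B(c, c') for every pair of basis elements c, c' among the 32 nodes and tropes. -/
/-!
The Kummer configuration of the 16 nodes and 16 tropes of a Jacobian Kummer
surface.  Nodes are indexed (0-indexed, so the paper's index `i` is `i-1 : Fin 6`)
by the subsets `∅` (for `E_0`) and `{i,j}` (for `E_{ij}`) of `Fin 6`; tropes by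
the subsets `{i}` (for `T_i`) and `{i,j,5}` (for `T_{ij6}`).
-/

/-- Subsets of `{1,…,6}` (0-indexed as `Fin 6`) indexing curve classes. -/
abbrev Idx : Type := Finset (Fin 6)

/-- Node indices: `E_0` is indexed by `∅` and `E_{ij}` by `{i,j}`. -/
def IsNode (S : Idx) : Prop := S.card = 0 ∨ S.card = 2

/-- Trope indices: `T_i` is indexed by `{i}` and `T_{ij6}` by `{i,j,6}`
(0-indexed: `6` becomes `5`). -/
def IsTrope (S : Idx) : Prop := S.card = 1 ∨ (S.card = 3 ∧ (5 : Fin 6) ∈ S)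

instance : DecidablePred IsNode :=
  fun S => inferInstanceAs (Decidable (S.card = 0 ∨ S.card = 2))

instance : DecidablePred IsTrope :=
  fun S => inferInstanceAs (Decidable (S.card = 1 ∨ (S.card = 3 ∧ (5 : Fin 6) ∈ S)))

/-- The 16 nodes. -/
abbrev NodeIdx : Type := {S : Idx // IsNode S}

/-- The 16 tropes. -/
abbrev TropeIdx : Type := {S : Idx // IsTrope S}

/-- The 32-element index set `N ⊔ T` of nodes and tropes. -/
abbrev Curve : Type := NodeIdx ⊕ TropeIdx

/-- Intersection number of the node indexed by `S` with the trope indexed by `U`: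
`(E_0·T_i) = 1`, `(E_0·T_{ij6}) = 0`, `(E_{ij}·T_k) = 1` iff `k ∈ {i,j}`,
`(E_{ij}·T_{kl6}) = 1` iff `{i,j} ⊆ {k,l,6}` or `{i,j} ∩ {k,l,6} = ∅`. -/
def nodeTropePairing (S U : Idx) : ℤ :=
  if S = ∅ then (if U.card = 1 then 1 else 0)
  else if U.card = 1 then (if U ⊆ S then 1 else 0)
  else if S ⊆ U ∨ S ∩ U = ∅ then 1 else 0

/-- The Gram matrix of the Kummer configuration: distinct nodes are disjoint,
distinct tropes are disjoint, every node and trope has self-intersection `-2`,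
and nodes meet tropes according to `nodeTropePairing`. -/
def gram : Curve → Curve → ℤ
  | Sum.inl E, Sum.inl E' => if E = E' then -2 else 0
  | Sum.inr T, Sum.inr T' => if T = T' then -2 else 0
  | Sum.inl E, Sum.inr T => nodeTropePairing E.1 T.1
  | Sum.inr T, Sum.inl E => nodeTropePairing E.1 T.1

/-- The free `ℤ`-module on the 32-element set of nodes and tropes. -/
abbrev L : Type := Curve → ℤ

/-- The basis element of `L` corresponding to a node or trope. -/
def e (c : Curve) : L := fun d => if d = c then 1 else 0

/-- The symmetric bilinear intersection form on `L` given by the Gram matrix. -/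
def B (x y : L) : ℤ := ∑ c : Curve, ∑ d : Curve, x c * gram c d * y d

/-- The Enriques involution on index sets, given by the table
`E_0 ↔ T_{456}`, `E_{12} ↔ T_3`, `E_{13} ↔ T_2`, `E_{14} ↔ T_{156}`,
`E_{15} ↔ T_{146}`, `E_{16} ↔ T_{236}`, `E_{23} ↔ T_1`, `E_{24} ↔ T_{256}`,
`E_{25} ↔ T_{246}`, `E_{26} ↔ T_{136}`, `E_{34} ↔ T_{356}`, `E_{35} ↔ T_{346}`,
`E_{36} ↔ T_{126}`, `E_{45} ↔ T_6`, `E_{46} ↔ T_5`, `E_{56} ↔ T_4`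
(all written 0-indexed below). -/
def thetaSet (S : Idx) : Idx :=
  if S = (∅ : Idx) then {3, 4, 5} else
  if S = {0, 1} then {2} else
  if S = {0, 2} then {1} else
  if S = {0, 3} then {0, 4, 5} else
  if S = {0, 4} then {0, 3, 5} else
  if S = {0, 5} then {1, 2, 5} else
  if S = {1, 2} then {0} else
  if S = {1, 3} then {1, 4, 5} else
  if S = {1, 4} then {1, 3, 5} else
  if S = {1, 5} then {0, 2, 5} else
  if S = {2, 3} then {2, 4, 5} else
  if S = {2, 4} then {2, 3, 5} else
  if S = {2, 5} then {0, 1, 5} else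
  if S = {3, 4} then {5} else
  if S = {3, 5} then {4} else
  if S = {4, 5} then {3} else
  if S = {3, 4, 5} then (∅ : Idx) else
  if S = {2} then {0, 1} else
  if S = {1} then {0, 2} else
  if S = {0, 4, 5} then {0, 3} else
  if S = {0, 3, 5} then {0, 4} else
  if S = {1, 2, 5} then {0, 5} else
  if S = {0} then {1, 2} else
  if S = {1, 4, 5} then {1, 3} else
  if S = {1, 3, 5} then {1, 4} else
  if S = {0, 2, 5} then {1, 5} else
  if S = {2, 4, 5} then {2, 3} else
  if S = {2, 3, 5} then {2, 4} else
  if S = {0, 1, 5} then {2, 5} else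
  if S = {5} then {3, 4} else
  if S = {4} then {3, 5} else
  if S = {3} then {4, 5} else S

theorem thetaSet_isTrope : ∀ S : Idx, IsNode S → IsTrope (thetaSet S) := by decide

theorem thetaSet_isNode : ∀ S : Idx, IsTrope S → IsNode (thetaSet S) := by decide

/-- The trope `θ(E)` associated to a node `E`. -/
def thetaTrope (E : NodeIdx) : TropeIdx := ⟨thetaSet E.1, thetaSet_isTrope E.1 E.2⟩

/-- The node `θ(T)` associated to a trope `T`. -/
def thetaNode (T : TropeIdx) : NodeIdx := ⟨thetaSet T.1, thetaSet_isNode T.1 T.2⟩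

/-- The Enriques involution `σ` as a permutation of the 32 curve classes. -/
def theta : Curve → Curve
  | Sum.inl E => Sum.inr (thetaTrope E)
  | Sum.inr T => Sum.inl (thetaNode T)

/-- The `ℤ`-linear extension of `theta` to the free module `L`,
sending the basis element `e c` to `e (theta c)`. -/
def sigma (x : L) : L := fun d => ∑ c : Curve, if theta c = d then x c else 0

lemma theta_theta : ∀ c : Curve, theta (theta c) = c := by decide

lemma theta_involutive : Function.Involutive theta := theta_theta

lemma gram_theta : ∀ c d : Curve, gram (theta c) (theta d) = gram c d := by decide

/-- `theta` as an `Equiv`. -/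
def thetaEquiv : Equiv.Perm Curve := Function.Involutive.toPerm _ theta_involutive

lemma sigma_apply (x : L) (d : Curve) : sigma x d = x (theta d) := by
  unfold sigma
  rw [Finset.sum_eq_single (theta d)]
  · simp [theta_involutive d]
  · intro c _ hc
    rw [if_neg]
    intro h
    exact hc (by rw [← h, theta_involutive c])
  · intro h; exact absurd (Finset.mem_univ _) h

/-- the Enriques involution `σ` is an isometry of the Kummer
configuration lattice: `B(σx, σy) = B(x, y)` for all `x y` in the free module,
equivalently `B(σc, σc') = B(c, c')` for all pairs of basis elements. -/
theorem sigma_is_isometry :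
    (∀ x y : L, B (sigma x) (sigma y) = B x y) ∧
    (∀ c c' : Curve, B (sigma (e c)) (sigma (e c')) = B (e c) (e c')) := by
  have main : ∀ x y : L, B (sigma x) (sigma y) = B x y := by
    intro x y
    unfold B
    simp only [sigma_apply]
    rw [← Equiv.sum_comp thetaEquiv (fun c => ∑ d : Curve, x (theta c) * gram c d * y (theta d))]
    refine Finset.sum_congr rfl fun c _ => ?_
    rw [← Equiv.sum_comp thetaEquiv (fun d => x (theta (thetaEquiv c)) * gram (thetaEquiv c) d * y (theta d))]
    refine Finset.sum_congr rfl fun d _ => ?_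
    have hc : theta (thetaEquiv c) = c := theta_involutive c
    have hd : theta (thetaEquiv d) = d := theta_involutive d
    show x (theta (thetaEquiv c)) * gram (thetaEquiv c) (thetaEquiv d) * y (theta (thetaEquiv d))
      = x c * gram c d * y d
    rw [hc, hd]
    show x c * gram (theta c) (theta d) * y d = _
    rw [gram_theta]
  exact ⟨main, fun c c' => main (e c) (e c')⟩
end

section
/- Divisor-level form of Corollary 3.8: let T0 be a trope, let a : N → ℕ be a function on the 16 nodes, and set D = Σ_{E ∈ N} a(E)·E + T0 in the free ℤ-module on the nodes and tropes. Call D' a nonzero effective subdivisor of D if D' = Σ_{E ∈ N} a'(E)·E + ε·T0 with 0 ≤ a'(E) ≤ a(E) for all E, ε ∈ {0,1}, and D' ≠ 0. Then D has no nonzero effective subdivisor D' with σD' = D' if and only if σ(T0) is not in the support of a. -/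
/-!
`θ` is an involution exchanging nodes and tropes, so `σ x = x` amounts to `x` taking the same
value on each node `E` and on the trope `θ E`. For `D' = Σ a'(E)·E + ε·T0` this forces
`a' = ε · [σ(T0)]`: the only invariant subdivisors are `0` and `σ(T0) + T0`, and the latter is
available exactly when `a(σ(T0)) ≥ 1`.
-/

lemma thetaSet_thetaSet : ∀ S : Idx, IsNode S ∨ IsTrope S → thetaSet (thetaSet S) = S := by
  decide

lemma thetaTrope_thetaNode (T : TropeIdx) : thetaTrope (thetaNode T) = T :=
  Subtype.ext (thetaSet_thetaSet T.1 (Or.inr T.2))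

lemma thetaNode_thetaTrope (E : NodeIdx) : thetaNode (thetaTrope E) = E :=
  Subtype.ext (thetaSet_thetaSet E.1 (Or.inl E.2))

lemma thetaTrope_eq_iff {E : NodeIdx} {T : TropeIdx} : thetaTrope E = T ↔ E = thetaNode T := by
  constructor <;> rintro rfl
  exacts [(thetaNode_thetaTrope E).symm, thetaTrope_thetaNode T]

lemma Function.Involutive.sum_ite_apply_eq {α M : Type*} [Fintype α] [DecidableEq α]
    [AddCommMonoid M] {f : α → α} (hf : Function.Involutive f) (x : α → M) (d : α) :
    ∑ c, (if f c = d then x c else 0) = x (f d) := by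
  simp_rw [hf.eq_iff, Fintype.sum_ite_eq']

lemma sigma_eq_self_iff (x : L) :
    sigma x = x ↔ ∀ E : NodeIdx, x (Sum.inr (thetaTrope E)) = x (Sum.inl E) := by
  simp only [funext_iff, sigma_apply]
  refine ⟨fun h E => h (Sum.inl E), ?_⟩
  rintro h (E | T)
  · exact h E
  · simpa only [theta, thetaTrope_thetaNode] using (h (thetaNode T)).symm

def nodeTropeDivisor (a : NodeIdx → ℕ) (ε : ℕ) (T : TropeIdx) : L :=
  (∑ E : NodeIdx, (a E : ℤ) • e (Sum.inl E)) + (ε : ℤ) • e (Sum.inr T)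

section nodeTropeDivisor

variable (a : NodeIdx → ℕ) (ε : ℕ) (T : TropeIdx)

lemma nodeTropeDivisor_apply_inl (E : NodeIdx) :
    nodeTropeDivisor a ε T (Sum.inl E) = a E := by
  simp [nodeTropeDivisor, e, Finset.sum_apply]

lemma nodeTropeDivisor_apply_inr (T' : TropeIdx) :
    nodeTropeDivisor a ε T (Sum.inr T') = if T' = T then (ε : ℤ) else 0 := by
  simp [nodeTropeDivisor, e, Finset.sum_apply]

lemma nodeTropeDivisor_ne_zero_of_ne_zero (hε : ε ≠ 0) : nodeTropeDivisor a ε T ≠ 0 := by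
  intro h
  have := congrFun h (Sum.inr T)
  simp_all [nodeTropeDivisor_apply_inr]

lemma nodeTropeDivisor_zero_zero : nodeTropeDivisor 0 0 T = 0 := by
  simp [nodeTropeDivisor]

lemma sigma_nodeTropeDivisor_eq_self_iff :
    sigma (nodeTropeDivisor a ε T) = nodeTropeDivisor a ε T ↔ a = Pi.single (thetaNode T) ε := by
  rw [sigma_eq_self_iff, funext_iff]
  simp only [nodeTropeDivisor_apply_inl, nodeTropeDivisor_apply_inr, Pi.single_apply]
  refine forall_congr' fun E => ?_
  simp only [thetaTrope_eq_iff]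
  split_ifs <;> omega

end nodeTropeDivisor

theorem no_invariant_subdivisor_iff_general (T0 : TropeIdx) (a : NodeIdx → ℕ) :
    (∀ (a' : NodeIdx → ℕ) (ε : ℕ), (∀ E : NodeIdx, a' E ≤ a E) → (ε = 0 ∨ ε = 1) →
      ∀ D' : L, D' = (∑ E : NodeIdx, (a' E : ℤ) • e (Sum.inl E)) + (ε : ℤ) • e (Sum.inr T0) →
        D' ≠ 0 → sigma D' ≠ D') ↔
    a (thetaNode T0) = 0 := by
  set n := thetaNode T0
  constructor
  · intro H
    by_contra hn
    refine H (Pi.single n 1) 1 (fun E => ?_) (Or.inr rfl) _ rfl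
      (nodeTropeDivisor_ne_zero_of_ne_zero _ _ _ one_ne_zero)
      ((sigma_nodeTropeDivisor_eq_self_iff _ _ _).mpr rfl)
    rcases eq_or_ne E n with rfl | hE
    · simpa [Nat.one_le_iff_ne_zero] using hn
    · simp [hE]
  · rintro hn a' ε ha' - D' rfl hD' hinv
    have ha'_eq : a' = Pi.single n ε := (sigma_nodeTropeDivisor_eq_self_iff a' ε T0).mp hinv
    have hε : ε = 0 := by simpa [ha'_eq, hn] using ha' n
    exact hD' (by rw [ha'_eq, hε, Pi.single_zero]; exact nodeTropeDivisor_zero_zero T0)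

/-- divisor-level form of Corollary 3.8: for `D = Σ_E a(E)·E + T0`,
`D` has no nonzero effective subdivisor `D' = Σ_E a'(E)·E + ε·T0`
(with `a' ≤ a` and `ε ∈ {0,1}`) satisfying `σD' = D'`, if and only if the node
`σ(T0)` is not in the support of `a`. -/
theorem no_invariant_subdivisor_iff (T0 : TropeIdx) (a : NodeIdx → ℕ)
    (D : L) (hD : D = (∑ E : NodeIdx, (a E : ℤ) • e (Sum.inl E)) + e (Sum.inr T0)) :
    (∀ (a' : NodeIdx → ℕ) (ε : ℕ), (∀ E : NodeIdx, a' E ≤ a E) → (ε = 0 ∨ ε = 1) →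
      ∀ D' : L, D' = (∑ E : NodeIdx, (a' E : ℤ) • e (Sum.inl E)) + (ε : ℤ) • e (Sum.inr T0) →
        D' ≠ 0 → sigma D' ≠ D') ↔
    a (thetaNode T0) = 0 :=
  no_invariant_subdivisor_iff_general T0 a
end
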